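/- The subgroup of GL(3,ℝ) generated by the matrices τ₁, δ and ρ is isomorphic to the symmetric group S₄ (the group of permutations of a four-element set). -/

import Mathlib

open Matrix

/-- The matrix representing the automorphism δ of `V_{L₂}`. -/
noncomputable def δ : GL (Fin 3) ℝ :=
  Matrix.GeneralLinearGroup.mkOfDetNeZero !![0,1,0; 0,0,-1; -1,0,0]
    (by norm_num [Matrix.det_fin_three, Matrix.cons_val_two])

/-- The matrix representing the automorphism τ₁ of `V_{L₂}`. -/
noncomputable def τ₁ : GL (Fin 3) ℝ :=
  Matrix.GeneralLinearGroup.mkOfDetNeZero !![1,0,0; 0,-1,0; 0,0,-1]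
    (by norm_num [Matrix.det_fin_three, Matrix.cons_val_two])

/-- The matrix representing the automorphism ρ of `V_{L₂}`. -/
noncomputable def ρ : GL (Fin 3) ℝ :=
  Matrix.GeneralLinearGroup.mkOfDetNeZero !![-1,0,0; 0,0,1; 0,1,0]
    (by norm_num [Matrix.det_fin_three, Matrix.cons_val_two])

/-!
The columns `v₀, …, v₃` of `tetrahedron` are four alternate vertices of the cube `[-1, 1]³`.
They satisfy `∑ vᵢ vᵢᵀ = 4 • 1` and have the permutation-invariant Gram matrix `4 • 1 - 1 1ᵀ`,
so `σ ↦ ¼ ∑ v_{σ i} vᵢᵀ` is the linear map `vᵢ ↦ v_{σ i}`, and it is multiplicative because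
a map is determined by its values on the `vᵢ`. Twisting by the sign turns these symmetries of the
tetrahedron into rotations of the cube; the resulting faithful representation of `S₄` sends
`(0 1)(2 3)`, `(0 1 2)` and `(0 1)` to `τ₁`, `δ` and `ρ`, and these permutations generate `S₄`
because they produce the transposition `(0 1)` and the `4`-cycle `(0 1 2 3)`.
-/

open Equiv

namespace Matrix

variable {R l m n : Type*} [CommRing R] [Fintype m] [DecidableEq m] [Fintype n]

structure IsPermInvariantTightFrame (A : Matrix m n R) (c : R) : Prop where
  mul_transpose : A * Aᵀ = c • 1
  transpose_mul_submatrix : ∀ σ : Perm n, (Aᵀ * A).submatrix σ σ = Aᵀ * A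

def signedPermRep [DecidableEq n] (A : Matrix m n R) (c : R) [Invertible c] (σ : Perm n) :
    Matrix m m R :=
  (Perm.sign σ : ℤ) • ⅟c • (A.submatrix id σ * Aᵀ)

namespace IsPermInvariantTightFrame

variable {A : Matrix m n R} {c : R}

theorem submatrix_mul_transpose_mul (hA : IsPermInvariantTightFrame A c) (σ : Perm n) :
    A.submatrix id σ * Aᵀ * A = c • A.submatrix id σ := by
  have hAG : A * (Aᵀ * A) = c • A := by
    rw [← Matrix.mul_assoc, hA.mul_transpose, smul_mul, Matrix.one_mul]
  calc A.submatrix id σ * Aᵀ * A = A.submatrix id σ * (Aᵀ * A).submatrix σ σ := by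
        rw [Matrix.mul_assoc, hA.transpose_mul_submatrix]
    _ = c • A.submatrix id σ := by
        rw [submatrix_mul_equiv, hAG]; rfl

variable [Invertible c]

theorem mul_right_cancel (hA : IsPermInvariantTightFrame A c) {X Y : Matrix l m R}
    (h : X * A = Y * A) : X = Y := by
  have hinv : A * (⅟c • Aᵀ) = 1 := by
    rw [Matrix.mul_smul, hA.mul_transpose, smul_smul, invOf_mul_self, one_smul]
  calc X = X * A * (⅟c • Aᵀ) := by rw [Matrix.mul_assoc, hinv, Matrix.mul_one]
    _ = Y * A * (⅟c • Aᵀ) := by rw [h]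
    _ = Y := by rw [Matrix.mul_assoc, hinv, Matrix.mul_one]

variable [DecidableEq n]

theorem signedPermRep_mul_self (hA : IsPermInvariantTightFrame A c) (σ : Perm n) :
    signedPermRep A c σ * A = (Perm.sign σ : ℤ) • A.submatrix id σ := by
  rw [signedPermRep, smul_mul, smul_mul, hA.submatrix_mul_transpose_mul, smul_smul,
    invOf_mul_self, one_smul]

theorem eq_signedPermRep_of_mul_eq (hA : IsPermInvariantTightFrame A c) {X : Matrix m m R}
    {σ : Perm n} (h : X * A = (Perm.sign σ : ℤ) • A.submatrix id σ) : X = signedPermRep A c σ :=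
  hA.mul_right_cancel <| by rw [h, hA.signedPermRep_mul_self]

theorem signedPermRep_one (hA : IsPermInvariantTightFrame A c) :
    signedPermRep A c 1 = 1 :=
  (hA.eq_signedPermRep_of_mul_eq (by simp)).symm

theorem signedPermRep_mul (hA : IsPermInvariantTightFrame A c) (σ τ : Perm n) :
    signedPermRep A c (σ * τ) = signedPermRep A c σ * signedPermRep A c τ := by
  refine (hA.eq_signedPermRep_of_mul_eq ?_).symm
  rw [Matrix.mul_assoc, hA.signedPermRep_mul_self, Matrix.mul_smul,
    ← submatrix_id_id (signedPermRep A c σ), ← submatrix_mul _ _ id id τ Function.bijective_id,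
    hA.signedPermRep_mul_self]
  simp only [Perm.sign_mul, Units.val_mul, mul_smul, submatrix_smul, Perm.coe_mul]
  exact smul_comm (Perm.sign τ : ℤ) (Perm.sign σ : ℤ) _

def signedPermRepHom (hA : IsPermInvariantTightFrame A c) : Perm n →* Matrix m m R where
  toFun := signedPermRep A c
  map_one' := hA.signedPermRep_one
  map_mul' := hA.signedPermRep_mul

end IsPermInvariantTightFrame

end Matrix

def tetrahedron : Matrix (Fin 3) (Fin 4) ℤ :=
  !![1, 1, -1, -1; 1, -1, 1, -1; 1, -1, -1, 1]

theorem isPermInvariantTightFrame_tetrahedron (R : Type*) [CommRing R] :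
    IsPermInvariantTightFrame (tetrahedron.map (Int.castRingHom R)) 4 where
  mul_transpose := by
    have h : tetrahedron * tetrahedronᵀ = (4 : ℤ) • 1 := by decide
    rw [← transpose_map, ← Matrix.map_mul, h, Matrix.map_smul', Matrix.map_one] <;> simp
  transpose_mul_submatrix σ := by
    have h : ∀ σ : Perm (Fin 4),
        (tetrahedronᵀ * tetrahedron).submatrix σ σ = tetrahedronᵀ * tetrahedron := by decide
    rw [← transpose_map, ← Matrix.map_mul, submatrix_map, h]

theorem eq_one_of_sign_smul_submatrix_tetrahedron {σ : Perm (Fin 4)}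
    (h : (Perm.sign σ : ℤ) • tetrahedron.submatrix id σ = tetrahedron) : σ = 1 := by
  revert σ
  decide

noncomputable instance : Invertible (4 : ℝ) := invertibleOfNonzero four_ne_zero

noncomputable def cubeRotationRep : Perm (Fin 4) →* GL (Fin 3) ℝ :=
  (isPermInvariantTightFrame_tetrahedron ℝ).signedPermRepHom.toHomUnits

theorem coe_cubeRotationRep (σ : Perm (Fin 4)) :
    (cubeRotationRep σ : Matrix (Fin 3) (Fin 3) ℝ) =
      signedPermRep (tetrahedron.map (Int.castRingHom ℝ)) 4 σ := rfl

theorem cubeRotationRep_injective : Function.Injective cubeRotationRep := by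
  refine (injective_iff_map_eq_one _).2 fun σ hσ => eq_one_of_sign_smul_submatrix_tetrahedron ?_
  have h := (isPermInvariantTightFrame_tetrahedron ℝ).signedPermRep_mul_self σ
  rw [← coe_cubeRotationRep, hσ, Units.val_one, Matrix.one_mul] at h
  ext i j
  have hij := congr_fun₂ h.symm i j
  simp only [Int.coe_castRingHom, Matrix.smul_apply, submatrix_apply, id_eq, map_apply,
    zsmul_eq_mul] at hij
  exact_mod_cast hij

theorem cubeRotationRep_eq_of_mul_tetrahedron {σ : Perm (Fin 4)} {g : GL (Fin 3) ℝ}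
    (h : (g : Matrix (Fin 3) (Fin 3) ℝ) * tetrahedron.map (Int.castRingHom ℝ) =
      (Perm.sign σ : ℤ) • (tetrahedron.map (Int.castRingHom ℝ)).submatrix id σ) :
    cubeRotationRep σ = g :=
  Units.ext ((isPermInvariantTightFrame_tetrahedron ℝ).eq_signedPermRep_of_mul_eq h).symm

theorem cubeRotationRep_eq_τ₁ : cubeRotationRep (swap 0 1 * swap 2 3) = τ₁ := by
  apply cubeRotationRep_eq_of_mul_tetrahedron
  ext i j
  fin_cases i <;> fin_cases j <;>
    simp [τ₁, tetrahedron, mul_apply, Fin.sum_univ_three, swap_apply_of_ne_of_ne]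

theorem cubeRotationRep_eq_δ : cubeRotationRep (swap 0 1 * swap 1 2) = δ := by
  apply cubeRotationRep_eq_of_mul_tetrahedron
  ext i j
  fin_cases i <;> fin_cases j <;>
    simp [δ, tetrahedron, mul_apply, Fin.sum_univ_three, swap_apply_of_ne_of_ne]

theorem cubeRotationRep_eq_ρ : cubeRotationRep (swap 0 1) = ρ := by
  apply cubeRotationRep_eq_of_mul_tetrahedron
  ext i j
  fin_cases i <;> fin_cases j <;>
    simp [ρ, tetrahedron, mul_apply, Fin.sum_univ_three, swap_apply_of_ne_of_ne]

theorem closure_swap_mul_swap_swap_mul_swap_swap_eq_top :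
    Subgroup.closure {swap (0 : Fin 4) 1 * swap 2 3, swap 0 1 * swap 1 2, swap 0 1} = ⊤ := by
  have hrot : finRotate 4 = swap 0 1 * swap 1 2 * swap 0 1 * (swap 0 1 * swap 2 3) := by decide
  have hswap : swap 0 (finRotate 4 0) = swap 0 1 := rfl
  rw [eq_top_iff, ← Perm.closure_cycle_adjacent_swap isCycle_finRotate support_finRotate 0, hswap,
    hrot, Subgroup.closure_le, Set.insert_subset_iff, Set.singleton_subset_iff]
  constructor
  · exact mul_mem (mul_mem (Subgroup.subset_closure (by simp)) (Subgroup.subset_closure (by simp)))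
      (Subgroup.subset_closure (by simp))
  · exact Subgroup.subset_closure (by simp)

theorem range_cubeRotationRep : cubeRotationRep.range = Subgroup.closure {τ₁, δ, ρ} := by
  rw [MonoidHom.range_eq_map, ← closure_swap_mul_swap_swap_mul_swap_swap_eq_top,
    MonoidHom.map_closure, Set.image_insert_eq, Set.image_insert_eq, Set.image_singleton,
    cubeRotationRep_eq_τ₁, cubeRotationRep_eq_δ, cubeRotationRep_eq_ρ]

theorem subgroup_closure_tau1_delta_rho_iso_S4 :
    Nonempty ((Subgroup.closure {τ₁, δ, ρ} : Subgroup (GL (Fin 3) ℝ)) ≃* Equiv.Perm (Fin 4)) :=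
  ⟨(MulEquiv.subgroupCongr range_cubeRotationRep.symm).trans
    (MonoidHom.ofInjective cubeRotationRep_injective).symm⟩
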